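/- arXiv:1810.06227 — 4 statements merged into one kernel-verified Lean document; each statement's English description precedes it below -/
import Mathlib

section
/- Let k ≥ 1, let n₁,…,n_k be positive integers, and let d ∈ (0,1). For a permutation σ of {1,…,k}, set a_i(σ) = n_{σ(i)} + n_{σ(i+1)} + ⋯ + n_{σ(k)}. Then ∑_{σ ∈ S_k} ∏_{i=1}^{k} 1/( a_i(σ) − (k−i+1)d ) = 1 / ∏_{i=1}^{k} (n_i − d), where S_k denotes the set of all k! permutations of {1,…,k}. -/
open MeasureTheory Finset

/-- Rising factorial `(x)_{(n)} = ∏_{j=0}^{n-1} (x+j)`. -/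
noncomputable def risingFactorial (x : ℝ) (n : ℕ) : ℝ := ∏ j ∈ Finset.range n, (x + j)

/-- Beta function `B(a,b) = Γ(a)Γ(b)/Γ(a+b)`. -/
noncomputable def betaFn (a b : ℝ) : ℝ := Real.Gamma a * Real.Gamma b / Real.Gamma (a + b)

/-- The partition of `{1,…,n}` induced by an allocation vector `z ∈ (ℕ₊)ⁿ`:
its blocks are the nonempty level sets `{i : z_i = j}`. -/
def Cz {n : ℕ} (z : Fin n → ℕ+) : Finset (Finset (Fin n)) :=
  Finset.image (fun i => Finset.univ.filter fun i' => z i' = z i) Finset.univ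

/-- `m(z) = max {z₁,…,zₙ}`. -/
def mz {n : ℕ} (z : Fin n → ℕ+) : ℕ := Finset.univ.sup fun i => (z i : ℕ)

/-- `g_j(z) = #{i : z_i ≥ j}`. -/
def gz {n : ℕ} (z : Fin n → ℕ+) (j : ℕ) : ℕ :=
  (Finset.univ.filter fun i => j ≤ (z i : ℕ)).card

/-- Access the `j`-th coordinate (1-indexed) of a vector `v : Fin m → ℝ`. -/
noncomputable def stk {m : ℕ} (v : Fin m → ℝ) (j : ℕ) : ℝ :=
  if h : j - 1 < m then v ⟨j - 1, h⟩ else 0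

/-- `C` is a partition of `{1,…,n}`: all blocks are nonempty and every element
belongs to exactly one block. -/
def IsPartition {n : ℕ} (C : Finset (Finset (Fin n))) : Prop :=
  (∀ c ∈ C, c.Nonempty) ∧ ∀ i : Fin n, ∃! c, c ∈ C ∧ i ∈ c

/-!
Writing `x_i = n_i - d > 0`, the denominator `a_i(σ) - (k-i+1)d` is the tail sum
`x_{σ(i)} + ⋯ + x_{σ(k)}`, so the claim is `∑_σ ∏_i 1/(x_{σ(i)} + ⋯ + x_{σ(k)}) = 1/∏_i x_i`
for positive weights `x`. Splitting the sum according to `p = σ(1)`, the first factor is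
always `1/∑ x`, and the remaining factors form the same sum for the other `k - 1` weights,
which by induction equals `x_p/∏ x`. Summing over `p` gives `(∑ x)/(∑ x ∏ x) = 1/∏ x`.
-/

open Equiv

lemma sum_Ici_succ_decomposeFin_symm {M : Type*} [AddCommMonoid M] {k : ℕ}
    (x : Fin (k + 1) → M) (p : Fin (k + 1)) (e : Perm (Fin k)) (i : Fin k) :
    ∑ l ∈ Ici i.succ, x (Perm.decomposeFin.symm (p, e) l) =
      ∑ l ∈ Ici i, x (swap 0 p (e l).succ) := by
  rw [← Fin.map_succEmb_Ici, sum_map]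
  simp [Perm.decomposeFin_symm_apply_succ]

lemma mul_prod_swap_zero_succ {M : Type*} [CommMonoid M] {k : ℕ}
    (x : Fin (k + 1) → M) (p : Fin (k + 1)) :
    x p * ∏ i : Fin k, x (swap 0 p i.succ) = ∏ i, x i := by
  simpa [Fin.prod_univ_succ] using Equiv.prod_comp (swap 0 p) x

lemma prod_inv_sum_Ici_decomposeFin_symm {K : Type*} [Semifield K] {k : ℕ}
    (x : Fin (k + 1) → K) (p : Fin (k + 1)) (e : Perm (Fin k)) :
    ∏ i, (∑ l ∈ Ici i, x (Perm.decomposeFin.symm (p, e) l))⁻¹ =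
      (∑ i, x i)⁻¹ * ∏ i : Fin k, (∑ l ∈ Ici i, x (swap 0 p (e l).succ))⁻¹ := by
  rw [Fin.prod_univ_succ]
  simp only [sum_Ici_succ_decomposeFin_symm]
  congr 2
  rw [show Ici (0 : Fin (k + 1)) = univ from Ici_bot]
  exact Equiv.sum_comp _ x

theorem sum_perm_prod_inv_sum_Ici {K : Type*} [Field K] [LinearOrder K] [IsStrictOrderedRing K] :
    ∀ {k : ℕ} (x : Fin k → K), (∀ i, 0 < x i) →
      ∑ σ : Perm (Fin k), ∏ i, (∑ l ∈ Ici i, x (σ l))⁻¹ = (∏ i, x i)⁻¹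
  | 0, _, _ => by simp
  | k + 1, x, hx => by
    have hsum : ∑ i, x i ≠ 0 := (sum_pos (fun i _ => hx i) univ_nonempty).ne'
    have hsum_first_eq : ∀ p : Fin (k + 1), ∑ e : Perm (Fin k),
        ∏ i, (∑ l ∈ Ici i, x (Perm.decomposeFin.symm (p, e) l))⁻¹ =
          (∑ i, x i)⁻¹ * (x p * (∏ i, x i)⁻¹) := by
      intro p
      simp only [prod_inv_sum_Ici_decomposeFin_symm, ← mul_sum]
      rw [sum_perm_prod_inv_sum_Ici (fun i => x (swap 0 p i.succ)) fun i => hx _,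
        ← mul_prod_swap_zero_succ x p, mul_inv, mul_inv_cancel_left₀ (hx p).ne']
    rw [← Equiv.sum_comp Perm.decomposeFin.symm, Fintype.sum_prod_type]
    simp only [hsum_first_eq, ← mul_sum, ← sum_mul, inv_mul_cancel_left₀ hsum]

theorem urn_sum_reciprocal_general {k : ℕ} (m : Fin k → ℕ+) (d : ℝ)
    (hd : d ∈ Set.Ioo (0 : ℝ) 1) :
    ∑ σ : Equiv.Perm (Fin k), ∏ i : Fin k,
        1 / ((∑ l ∈ Finset.Ici i, ((m (σ l) : ℕ) : ℝ)) - ((k : ℝ) - (i : ℕ)) * d)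
      = 1 / ∏ i : Fin k, (((m i : ℕ) : ℝ) - d) := by
  have hpos : ∀ i, 0 < ((m i : ℕ) : ℝ) - d := fun i => by
    have : (1 : ℝ) ≤ ((m i : ℕ) : ℝ) := mod_cast (m i).pos
    linarith [hd.2]
  simp only [one_div]
  rw [← sum_perm_prod_inv_sum_Ici _ hpos]
  refine sum_congr rfl fun σ _ => prod_congr rfl fun i _ => ?_
  rw [sum_sub_distrib, sum_const, Fin.card_Ici, nsmul_eq_mul, Nat.cast_sub i.isLt.le]

/-- For positive integers `n₁,…,n_k` and `d ∈ (0,1)`, with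
`a_i(σ) = n_{σ(i)} + ⋯ + n_{σ(k)}`,
`∑_{σ ∈ S_k} ∏_{i=1}^k 1/(a_i(σ) - (k-i+1)d) = 1/∏_{i=1}^k (n_i - d)`.
(Here `i : Fin k` is 0-indexed, representing position `i+1`, so `k-i+1` becomes `k - i`.) -/
theorem urn_sum_reciprocal {k : ℕ} (hk : 1 ≤ k) (m : Fin k → ℕ+) (d : ℝ)
    (hd : d ∈ Set.Ioo (0 : ℝ) 1) :
    ∑ σ : Equiv.Perm (Fin k), ∏ i : Fin k,
        1 / ((∑ l ∈ Finset.Ici i, ((m (σ l) : ℕ) : ℝ)) - ((k : ℝ) - (i : ℕ)) * d)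
      = 1 / ∏ i : Fin k, (((m i : ℕ) : ℝ) - d) :=
  urn_sum_reciprocal_general m d hd
end

section
/- Let d ∈ (0,1), α > −d, let k ≥ 1, and let a₁,…,a_k be positive reals with a_i > (k+1−i)·d for each i. For b = (b₁,…,b_k) ∈ (ℕ₊)^k set b̄₀ = 0 and b̄_i = b₁ + ⋯ + b_i. Then the iterated sum ∑_{b₁≥1} ⋯ ∑_{b_k≥1} ∏_{i=1}^k (α/d + b̄_{i−1})_{(b_i)} / ((a_i+α)/d + b̄_{i−1})_{(b_i)} converges and equals (α/d)_{(k)} / ∏_{i=1}^{k} ( a_i/d − (k+1−i) ). -/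
open MeasureTheory Finset

namespace RFAux

lemma rf_zero (x : ℝ) : risingFactorial x 0 = 1 := by simp [risingFactorial]

lemma rf_succ (x : ℝ) (n : ℕ) : risingFactorial x (n+1) = risingFactorial x n * (x + n) := by
  simp [risingFactorial, Finset.prod_range_succ]

lemma rf_one (x : ℝ) : risingFactorial x 1 = x := by simp [risingFactorial]

lemma rf_add (x : ℝ) (m n : ℕ) :
    risingFactorial x (m + n) = risingFactorial x m * risingFactorial (x + m) n := by
  rw [risingFactorial, Finset.prod_range_add]
  congr 1
  apply Finset.prod_congr rfl
  intro j _
  push_cast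
  ring

lemma rf_succ_left (x : ℝ) (n : ℕ) :
    risingFactorial x (n + 1) = x * risingFactorial (x + 1) n := by
  rw [show n + 1 = 1 + n by ring, rf_add, rf_one]
  norm_num

lemma rf_pos {x : ℝ} (hx : 0 < x) (n : ℕ) : 0 < risingFactorial x n := by
  apply Finset.prod_pos
  intro j _
  positivity

lemma not_summable_shift {y : ℝ} (hy : 0 < y) : ¬ Summable (fun n : ℕ => 1 / (y + n)) := by
  intro h
  apply Real.not_summable_one_div_natCast
  apply Summable.of_nonneg_of_le (fun n => by positivity) _ (h.mul_left (y + 1))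
  intro n
  rcases Nat.eq_zero_or_pos n with rfl | hn
  · simp
    positivity
  · have hn1 : (1 : ℝ) ≤ n := by exact_mod_cast hn
    rw [mul_one_div, div_le_div_iff₀ (by positivity) (by positivity)]
    nlinarith

lemma hasSum_pnat_iff {f : ℕ+ → ℝ} {a : ℝ} :
    HasSum f a ↔ HasSum (fun n : ℕ => f n.succPNat) a :=
  (Equiv.pnatEquivNat.symm.hasSum_iff (f := f)).symm

lemma keyM {x c : ℝ} (hx : 0 < x) (m : ℕ) (hc : (m : ℝ) + 1 < c) :
    HasSum (fun n : ℕ+ => risingFactorial x ((n : ℕ) + m) / risingFactorial (x + c) n)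
      (risingFactorial x (m + 1) / (c - m - 1)) := by
  have hc1 : 0 < c - m - 1 := by linarith
  have hxc : 0 < x + c := by
    have : (0:ℝ) ≤ m := Nat.cast_nonneg m
    linarith
  set S : ℕ → ℝ :=
    fun n => risingFactorial x (n + m + 1) / ((c - m - 1) * risingFactorial (x + c) n) with hS
  have Spos : ∀ n, 0 < S n := fun n => by
    have := rf_pos hx (n + m + 1); have := rf_pos hxc n
    positivity
  have tele : ∀ n : ℕ,
      risingFactorial x ((n + 1) + m) / risingFactorial (x + c) (n + 1) = S n - S (n + 1) := by
    intro n
    have e1 : risingFactorial x (n + 1 + m) = risingFactorial x (n + m + 1) := by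
      congr 1; omega
    have e2 : risingFactorial x (n + 1 + m + 1)
        = risingFactorial x (n + m + 1) * (x + n + m + 1) := by
      have h' : n + 1 + m + 1 = (n + m + 1) + 1 := by omega
      rw [h', rf_succ]; push_cast; ring
    have h3 : risingFactorial (x + c) (n + 1)
        = risingFactorial (x + c) n * (x + c + n) := rf_succ _ n
    have hB : 0 < risingFactorial (x + c) n := rf_pos hxc n
    have hB' : 0 < x + c + (n:ℝ) := by positivity
    rw [hS]
    simp only [e1, e2, h3]
    generalize risingFactorial x (n + m + 1) = A
    generalize hBB : risingFactorial (x + c) n = B at hB ⊢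
    field_simp
    ring
  have gdec : ∀ n : ℕ, S n - S (n + 1) = S n * ((c - m - 1) / (x + c + n)) := by
    intro n
    rw [← tele n]
    have e1 : risingFactorial x (n + 1 + m) = risingFactorial x (n + m + 1) := by
      congr 1; omega
    have h3 : risingFactorial (x + c) (n + 1)
        = risingFactorial (x + c) n * (x + c + n) := rf_succ _ n
    have hB : 0 < risingFactorial (x + c) n := rf_pos hxc n
    have hB' : 0 < x + c + (n:ℝ) := by positivity
    rw [hS]
    simp only [e1, h3]
    generalize risingFactorial x (n + m + 1) = A
    generalize hBB : risingFactorial (x + c) n = B at hB ⊢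
    field_simp
  have Santi : Antitone S := antitone_nat_of_succ_le fun n => by
    have h := gdec n
    have h2 : 0 < S n * ((c - m - 1) / (x + c + n)) := by
      have hs := Spos n
      have h1 : (0:ℝ) < x + c + n := by positivity
      positivity
    linarith
  have hbdd : BddBelow (Set.range S) := ⟨0, by rintro _ ⟨n, rfl⟩; exact (Spos n).le⟩
  have hL : Filter.Tendsto S Filter.atTop (nhds (⨅ n, S n)) := tendsto_atTop_ciInf Santi hbdd
  set L := ⨅ n, S n with hLdef
  have hLnonneg : 0 ≤ L := le_ciInf fun n => (Spos n).le
  have hLle : ∀ n, L ≤ S n := fun n => ciInf_le hbdd n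
  set g : ℕ → ℝ := fun n => S n - S (n + 1) with hg
  have gnonneg : ∀ n, 0 ≤ g n := fun n => by
    rw [hg]; simp only; rw [← tele n]
    have := rf_pos hx (n + 1 + m); have := rf_pos hxc (n + 1)
    positivity
  have gpartial : ∀ N, ∑ i ∈ Finset.range N, g i = S 0 - S N := fun N =>
    Finset.sum_range_sub' S N
  have gsummable : Summable g := by
    apply summable_of_sum_range_le (c := S 0) gnonneg
    intro N
    rw [gpartial]
    have := Spos N
    linarith
  have hL0 : L = 0 := by
    by_contra hne
    have hLpos : 0 < L := lt_of_le_of_ne hLnonneg (Ne.symm hne)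
    have hcomp : Summable (fun n : ℕ => L * (c - m - 1) * (1 / (x + c + n))) := by
      apply Summable.of_nonneg_of_le _ _ gsummable
      · intro n
        have h1 : (0:ℝ) < x + c + n := by positivity
        positivity
      · intro n
        rw [hg]; simp only; rw [gdec n]
        rw [mul_one_div, mul_div_assoc]
        apply mul_le_mul_of_nonneg_right (hLle n)
        have h1 : (0:ℝ) < x + c + n := by positivity
        positivity
    have hsum2 : Summable (fun n : ℕ => 1 / (x + c + n)) := by
      have h2 := hcomp.mul_left (1 / (L * (c - m - 1)))
      apply h2.congr
      intro n
      have h3 : L * (c - m - 1) ≠ 0 := by positivity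
      field_simp
    exact not_summable_shift hxc hsum2
  rw [hL0] at hL
  have htendsto : Filter.Tendsto (fun N => ∑ i ∈ Finset.range N, g i)
      Filter.atTop (nhds (S 0)) := by
    simp only [gpartial]
    have h4 : Filter.Tendsto (fun N => S 0 - S N) Filter.atTop (nhds (S 0 - 0)) :=
      Filter.Tendsto.const_sub _ hL
    simpa using h4
  have hgsum : HasSum g (S 0) := (hasSum_iff_tendsto_nat_of_nonneg gnonneg _).2 htendsto
  rw [hasSum_pnat_iff]
  have hS0 : S 0 = risingFactorial x (m + 1) / (c - m - 1) := by
    rw [hS]; simp only [Nat.zero_add, rf_zero, mul_one, zero_add]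
  have hfun : (fun n : ℕ => risingFactorial x (((n.succPNat : ℕ+) : ℕ) + m)
      / risingFactorial (x + c) ((n.succPNat : ℕ+) : ℕ)) = g := by
    funext n
    have h5 : ((n.succPNat : ℕ+) : ℕ) = n + 1 := rfl
    rw [h5, tele n]
  rw [← hS0]
  exact hfun ▸ hgsum


lemma keyShift {y c : ℝ} (hy : 0 < y) (m : ℕ) (hc : (m:ℝ) < c) :
    HasSum (fun n : ℕ+ => risingFactorial y ((n:ℕ) - 1 + m) / risingFactorial (y + c) n)
      (risingFactorial y m / (c - m)) := by
  have hm0 : (0:ℝ) ≤ m := Nat.cast_nonneg m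
  have hyc : 0 < y + c := by linarith
  have hcm : 0 < c - m := by linarith
  set G : ℕ → ℝ := fun n => risingFactorial y (n + m) / risingFactorial (y + (c+1)) n with hGdef
  have hG1 : HasSum (fun n : ℕ => G (n+1)) (risingFactorial y (m+1) / (c - m)) := by
    have h1 := keyM hy m (show (m:ℝ) + 1 < c + 1 by linarith)
    rw [hasSum_pnat_iff] at h1
    have h2 : c + 1 - m - 1 = c - m := by ring
    rw [h2] at h1
    apply h1.congr
    intro n
    simp only [hGdef, Nat.succPNat_coe]
  have hG : HasSum G (risingFactorial y (m+1) / (c - m) + risingFactorial y m) := by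
    have h3 := (hasSum_nat_add_iff (f := G) 1).1 hG1
    have h4 : ∑ i ∈ Finset.range 1, G i = risingFactorial y m := by
      simp [hGdef, rf_zero]
    rwa [h4] at h3
  have hGd := hG.div_const (y + c)
  rw [hasSum_pnat_iff]
  have hfun : (fun n : ℕ => G n / (y + c))
      = fun n : ℕ => risingFactorial y (((n.succPNat : ℕ+) : ℕ) - 1 + m)
        / risingFactorial (y + c) ((n.succPNat : ℕ+) : ℕ) := by
    funext n
    have h5 : ((n.succPNat : ℕ+) : ℕ) = n + 1 := rfl
    rw [h5]
    have h6 : n + 1 - 1 + m = n + m := by omega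
    rw [h6]
    have h7 : risingFactorial (y + c) (n + 1) = (y + c) * risingFactorial (y + c + 1) n :=
      rf_succ_left _ n
    have h8 : y + c + 1 = y + (c + 1) := by ring
    rw [hGdef]
    simp only [h7, h8]
    rw [div_div, mul_comm]
  have hval : (risingFactorial y (m+1) / (c - m) + risingFactorial y m) / (y + c)
      = risingFactorial y m / (c - m) := by
    rw [rf_succ]
    field_simp
    ring
  rw [← hfun]
  rwa [hval] at hGd

lemma Iio_succ_eq {k : ℕ} (i : Fin k) :
    Finset.Iio i.succ
      = insert (0 : Fin (k+1)) ((Finset.Iio i).map ⟨Fin.succ, Fin.succ_injective k⟩) := by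
  ext l
  simp only [Finset.mem_Iio, Finset.mem_insert, Finset.mem_map, Function.Embedding.coeFn_mk]
  constructor
  · intro hl
    rcases Fin.eq_zero_or_eq_succ l with rfl | ⟨j, rfl⟩
    · exact Or.inl rfl
    · right
      exact ⟨j, by simpa [Fin.succ_lt_succ_iff] using hl, rfl⟩
  · rintro (rfl | ⟨j, hj, rfl⟩)
    · exact Fin.succ_pos i
    · exact Fin.succ_lt_succ_iff.2 hj

lemma sum_Iio_succ {k : ℕ} (f : Fin (k+1) → ℝ) (i : Fin k) :
    ∑ l ∈ Finset.Iio i.succ, f l = f 0 + ∑ l ∈ Finset.Iio i, f l.succ := by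
  rw [Iio_succ_eq, Finset.sum_insert (by simp [Fin.succ_ne_zero]), Finset.sum_map]
  rfl

lemma aux (k : ℕ) : ∀ (x : ℝ), 0 < x → ∀ a : Fin k → ℝ, (∀ i : Fin k, ((k:ℝ) - (i:ℕ)) < a i) →
    HasSum (fun b : Fin k → ℕ+ => ∏ i : Fin k,
      risingFactorial (x + ∑ l ∈ Finset.Iio i, ((b l : ℕ):ℝ)) (b i) /
      risingFactorial (x + a i + ∑ l ∈ Finset.Iio i, ((b l : ℕ):ℝ)) (b i))
      (risingFactorial x k / ∏ i : Fin k, (a i - ((k:ℝ) - (i:ℕ)))) := by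
  induction k with
  | zero =>
    intro x hx a ha
    have h1 : HasSum (fun _ : Fin 0 → ℕ+ => (1:ℝ)) 1 :=
      hasSum_single default (fun b hb => absurd (Subsingleton.elim b default) hb)
    simpa [risingFactorial] using h1
  | succ k ih =>
    intro x hx a ha
    set c := a 0 with hcdef
    have hc : (k:ℝ) + 1 < c := by
      have h := ha 0
      push_cast at h
      simpa using h
    have hk0 : (0:ℝ) ≤ k := Nat.cast_nonneg k
    have hxc : 0 < x + c := by linarith
    have ha' : ∀ i : Fin k, ((k:ℝ) - (i:ℕ)) < a i.succ := by
      intro i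
      have h := ha i.succ
      have hi : ((i.succ : Fin (k+1)) : ℕ) = (i : ℕ) + 1 := rfl
      rw [hi] at h
      push_cast at h ⊢
      linarith
    have hapos' : ∀ i : Fin k, 0 < a i.succ - ((k:ℝ) - (i:ℕ)) := by
      intro i
      have := ha' i
      linarith
    set D := ∏ i : Fin k, (a i.succ - ((k:ℝ) - (i:ℕ))) with hDdef
    have hD : 0 < D := Finset.prod_pos fun i _ => hapos' i
    set F : ℕ+ × (Fin k → ℕ+) → ℝ := fun p =>
      (risingFactorial x (p.1 : ℕ) / risingFactorial (x + c) (p.1 : ℕ)) *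
      ∏ i : Fin k,
        risingFactorial ((x + ((p.1 : ℕ):ℝ)) + ∑ l ∈ Finset.Iio i, ((p.2 l : ℕ):ℝ)) (p.2 i) /
        risingFactorial ((x + ((p.1 : ℕ):ℝ)) + a i.succ + ∑ l ∈ Finset.Iio i, ((p.2 l : ℕ):ℝ))
          (p.2 i) with hF
    set g : ℕ+ → ℝ := fun n =>
      (risingFactorial x (n : ℕ) / risingFactorial (x + c) (n : ℕ)) *
        (risingFactorial (x + ((n : ℕ):ℝ)) k / D) with hgdef
    have fiber : ∀ n : ℕ+, HasSum (fun b' => F (n, b')) (g n) := by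
      intro n
      have hxn : (0:ℝ) < x + ((n : ℕ):ℝ) := by positivity
      exact (ih (x + ((n : ℕ):ℝ)) hxn (fun i => a i.succ) ha').mul_left _
    have gval : ∀ n : ℕ+,
        g n = risingFactorial x ((n:ℕ) + k) / risingFactorial (x + c) (n:ℕ) / D := by
      intro n
      rw [hgdef]
      simp only
      rw [rf_add x (n:ℕ) k]
      ring
    have gsum : HasSum g (risingFactorial x (k+1) / (c - k - 1) / D) := by
      have h1 := (keyM hx k hc).div_const D
      have h2 : (fun n : ℕ+ => risingFactorial x ((n:ℕ) + k) / risingFactorial (x + c) (n:ℕ) / D)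
          = g := by
        funext n
        rw [gval n]
      rwa [h2] at h1
    have Fnonneg : ∀ p, 0 ≤ F p := by
      intro ⟨n, b'⟩
      rw [hF]
      simp only
      have hxn : (0:ℝ) < x + ((n : ℕ):ℝ) := by positivity
      apply mul_nonneg (div_nonneg (rf_pos hx _).le (rf_pos hxc _).le)
      apply Finset.prod_nonneg
      intro i _
      have hB : (0:ℝ) ≤ ∑ l ∈ Finset.Iio i, ((b' l : ℕ):ℝ) :=
        Finset.sum_nonneg fun l _ => by positivity
      have hai : 0 < a i.succ := by
        have h1 := ha' i
        have h2 : ((i:ℕ):ℝ) ≤ k := by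
          have := i.2
          exact_mod_cast this.le
        linarith
      exact div_nonneg (rf_pos (by linarith) _).le (rf_pos (by linarith) _).le
    have sumF : Summable F := by
      apply (summable_prod_of_nonneg Fnonneg).2
      refine ⟨fun n => (fiber n).summable, ?_⟩
      have h3 : (fun n : ℕ+ => ∑' b', F (n, b')) = g := by
        funext n
        exact (fiber n).tsum_eq
      rw [h3]
      exact gsum.summable
    have hFsum : HasSum F (risingFactorial x (k+1) / (c - k - 1) / D) := by
      have h2 : HasSum F (∑' p, F p) := sumF.hasSum
      have h3 : HasSum g (∑' p, F p) := h2.prod_fiberwise fiber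
      rwa [h3.unique gsum] at h2
    rw [← Equiv.hasSum_iff (Fin.consEquiv fun _ : Fin (k+1) => ℕ+)]
    have hcomp : ((fun b : Fin (k+1) → ℕ+ => ∏ i : Fin (k+1),
        risingFactorial (x + ∑ l ∈ Finset.Iio i, ((b l : ℕ):ℝ)) (b i) /
        risingFactorial (x + a i + ∑ l ∈ Finset.Iio i, ((b l : ℕ):ℝ)) (b i))
          ∘ (Fin.consEquiv fun _ : Fin (k+1) => ℕ+)) = F := by
      funext p
      obtain ⟨n, b'⟩ := p
      have he : (Fin.consEquiv fun _ : Fin (k+1) => ℕ+) (n, b') = Fin.cons n b' := rfl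
      simp only [Function.comp_apply, he]
      rw [Fin.prod_univ_succ, hF]
      simp only
      congr 1
      · have h0 : Finset.Iio (0 : Fin (k+1)) = ∅ := rfl
        simp [h0, Fin.cons_zero, hcdef]
      · apply Finset.prod_congr rfl
        intro i _
        have hs : ∑ l ∈ Finset.Iio i.succ, (((Fin.cons (α := fun _ : Fin (k+1) => ℕ+) n b' l) : ℕ):ℝ)
            = ((n:ℕ):ℝ) + ∑ l ∈ Finset.Iio i, ((b' l : ℕ):ℝ) := by
          rw [sum_Iio_succ (fun l => (((Fin.cons (α := fun _ : Fin (k+1) => ℕ+) n b' l) : ℕ):ℝ)) i]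
          simp [Fin.cons_zero, Fin.cons_succ]
        rw [Fin.cons_succ]
        rw [hs]
        ring_nf
    rw [hcomp]
    have hval : risingFactorial x (k+1) / (c - k - 1) / D
        = risingFactorial x (k+1) / ∏ i : Fin (k+1), (a i - (((k+1:ℕ):ℝ) - (i:ℕ))) := by
      have hprod : ∏ i : Fin (k+1), (a i - (((k+1:ℕ):ℝ) - (i:ℕ))) = (c - (k+1)) * D := by
        rw [Fin.prod_univ_succ]
        congr 1
        · push_cast
          simp [hcdef]
        · rw [hDdef]
          apply Finset.prod_congr rfl
          intro i _
          have hi : ((i.succ : Fin (k+1)) : ℕ) = (i : ℕ) + 1 := rfl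
          rw [hi]
          push_cast
          ring
      rw [hprod, div_div]
      congr 1
      ring
    rw [← hval]
    exact hFsum

end RFAux

open RFAux

/-- The iterated sum over `b = (b₁,…,b_k) ∈ (ℕ₊)^k` (equivalently, since
all terms are nonnegative, the sum over the product space) of
`∏_{i=1}^k (α/d + b̄_{i-1})_{(b_i)} / ((a_i+α)/d + b̄_{i-1})_{(b_i)}`
converges and equals `(α/d)_{(k)} / ∏_{i=1}^k (a_i/d - (k+1-i))`.
(Here `i : Fin k` is 0-indexed, representing position `i+1`, so `k+1-i` becomes `k - i`,
and `b̄_{i-1} = ∑_{l<i} b_l`.) -/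
theorem iterated_sum_risingFactorial {k : ℕ} (hk : 1 ≤ k) (d α : ℝ)
    (hd : d ∈ Set.Ioo (0 : ℝ) 1) (hα : -d < α)
    (a : Fin k → ℝ) (hapos : ∀ i, 0 < a i)
    (ha : ∀ i : Fin k, ((k : ℝ) - (i : ℕ)) * d < a i) :
    HasSum
      (fun b : Fin k → ℕ+ =>
        ∏ i : Fin k,
          risingFactorial (α / d + ∑ l ∈ Finset.Iio i, ((b l : ℕ) : ℝ)) (b i) /
            risingFactorial ((a i + α) / d + ∑ l ∈ Finset.Iio i, ((b l : ℕ) : ℝ)) (b i))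
      (risingFactorial (α / d) k / ∏ i : Fin k, (a i / d - ((k : ℝ) - (i : ℕ)))) := by
  obtain ⟨k', rfl⟩ : ∃ k', k = k' + 1 := ⟨k - 1, by omega⟩
  clear hk
  obtain ⟨hd0, hd1⟩ := hd
  set x := α / d with hxdef
  have hx1 : -1 < x := by
    rw [hxdef, lt_div_iff₀ hd0]
    linarith
  have hx1' : (0:ℝ) < x + 1 := by linarith
  set a' : Fin (k' + 1) → ℝ := fun i => a i / d with ha'def
  have ha' : ∀ i : Fin (k' + 1), ((k' + 1 : ℝ) - (i : ℕ)) < a' i := by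
    intro i
    rw [ha'def]
    simp only
    rw [lt_div_iff₀ hd0]
    have h := ha i
    push_cast at h ⊢
    linarith
  -- rewrite the function and the target value in terms of x, a'
  have hfeq : (fun b : Fin (k'+1) → ℕ+ =>
      ∏ i : Fin (k'+1),
        risingFactorial (α / d + ∑ l ∈ Finset.Iio i, ((b l : ℕ) : ℝ)) (b i) /
          risingFactorial ((a i + α) / d + ∑ l ∈ Finset.Iio i, ((b l : ℕ) : ℝ)) (b i))
      = (fun b : Fin (k'+1) → ℕ+ =>
      ∏ i : Fin (k'+1),
        risingFactorial (x + ∑ l ∈ Finset.Iio i, ((b l : ℕ) : ℝ)) (b i) /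
          risingFactorial (x + a' i + ∑ l ∈ Finset.Iio i, ((b l : ℕ) : ℝ)) (b i)) := by
    funext b
    apply Finset.prod_congr rfl
    intro i _
    congr 2
    rw [ha'def, hxdef]
    simp only
    rw [add_div]
    ring
  rw [hfeq]
  have htval : (∏ i : Fin (k'+1), (a i / d - ((k' + 1 : ℕ) - (i : ℕ) : ℝ)))
      = ∏ i : Fin (k'+1), (a' i - (((k'+1 : ℕ):ℝ) - (i : ℕ))) := rfl
  rw [htval]
  -- now the main argument
  have hc : (k':ℝ) + 1 < a' 0 := by
    have h := ha' 0
    push_cast at h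
    simpa using h
  set c := a' 0 with hcdef
  have hk0 : (0:ℝ) ≤ k' := Nat.cast_nonneg k'
  have hxc : 0 < x + c := by linarith
  have ha'' : ∀ i : Fin k', ((k':ℝ) - (i:ℕ)) < a' i.succ := by
    intro i
    have h := ha' i.succ
    have hi : ((i.succ : Fin (k'+1)) : ℕ) = (i : ℕ) + 1 := rfl
    rw [hi] at h
    push_cast at h ⊢
    linarith
  have hapos'' : ∀ i : Fin k', 0 < a' i.succ - ((k':ℝ) - (i:ℕ)) := by
    intro i
    have := ha'' i
    linarith
  set D := ∏ i : Fin k', (a' i.succ - ((k':ℝ) - (i:ℕ))) with hDdef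
  have hD : 0 < D := Finset.prod_pos fun i _ => hapos'' i
  set H : ℕ+ × (Fin k' → ℕ+) → ℝ := fun p =>
    (risingFactorial (x+1) ((p.1 : ℕ) - 1) / risingFactorial (x + c) (p.1 : ℕ)) *
    ∏ i : Fin k',
      risingFactorial ((x + ((p.1 : ℕ):ℝ)) + ∑ l ∈ Finset.Iio i, ((p.2 l : ℕ):ℝ)) (p.2 i) /
      risingFactorial ((x + ((p.1 : ℕ):ℝ)) + a' i.succ + ∑ l ∈ Finset.Iio i, ((p.2 l : ℕ):ℝ))
        (p.2 i) with hH
  set gh : ℕ+ → ℝ := fun n =>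
    (risingFactorial (x+1) ((n : ℕ) - 1) / risingFactorial (x + c) (n : ℕ)) *
      (risingFactorial (x + ((n : ℕ):ℝ)) k' / D) with hghdef
  have hge : ∀ n : ℕ+, 1 ≤ (n:ℕ) := fun n => n.2
  have hncast : ∀ n : ℕ+, (((n:ℕ) - 1 : ℕ) : ℝ) = ((n:ℕ):ℝ) - 1 := by
    intro n
    rw [Nat.cast_sub (hge n)]
    norm_num
  have hnpos : ∀ n : ℕ+, (0:ℝ) < x + ((n:ℕ):ℝ) := by
    intro n
    have h1 : (1:ℝ) ≤ ((n:ℕ):ℝ) := by exact_mod_cast n.one_le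
    linarith
  have fiber : ∀ n : ℕ+, HasSum (fun b' => H (n, b')) (gh n) := by
    intro n
    exact (aux k' (x + ((n : ℕ):ℝ)) (hnpos n) (fun i => a' i.succ) ha'').mul_left _
  have ghval : ∀ n : ℕ+,
      gh n = risingFactorial (x+1) ((n:ℕ) - 1 + k')
        / risingFactorial ((x+1) + (c-1)) (n:ℕ) / D := by
    intro n
    rw [hghdef]
    simp only
    rw [rf_add (x+1) ((n:ℕ) - 1) k', Nat.cast_sub (hge n)]
    have h2 : x + 1 + (((n:ℕ):ℝ) - ((1:ℕ):ℝ)) = x + ((n:ℕ):ℝ) := by push_cast; ring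
    have h3 : (x+1) + (c-1) = x + c := by ring
    rw [h2, h3]
    ring
  have ghsum : HasSum gh (risingFactorial (x+1) k' / (c - 1 - k') / D) := by
    have h1 := (keyShift hx1' k' (show (k':ℝ) < c - 1 by linarith)).div_const D
    have h2 : (fun n : ℕ+ => risingFactorial (x+1) ((n:ℕ) - 1 + k')
        / risingFactorial ((x+1) + (c-1)) (n:ℕ) / D) = gh := by
      funext n
      rw [ghval n]
    rw [h2] at h1
    have h3 : c - 1 - (k':ℝ) = (c - 1) - k' := by ring
    rwa [h3]
  have Hnonneg : ∀ p, 0 ≤ H p := by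
    intro ⟨n, b'⟩
    rw [hH]
    simp only
    apply mul_nonneg (div_nonneg (rf_pos hx1' _).le (rf_pos hxc _).le)
    apply Finset.prod_nonneg
    intro i _
    have hB : (0:ℝ) ≤ ∑ l ∈ Finset.Iio i, ((b' l : ℕ):ℝ) :=
      Finset.sum_nonneg fun l _ => by positivity
    have hai : 0 < a' i.succ := by
      have h1 := ha'' i
      have h2 : ((i:ℕ):ℝ) ≤ k' := by exact_mod_cast i.2.le
      linarith
    have hn := hnpos n
    exact div_nonneg (rf_pos (by linarith) _).le (rf_pos (by linarith) _).le
  have sumH : Summable H := by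
    apply (summable_prod_of_nonneg Hnonneg).2
    refine ⟨fun n => (fiber n).summable, ?_⟩
    have h3 : (fun n : ℕ+ => ∑' b', H (n, b')) = gh := by
      funext n
      exact (fiber n).tsum_eq
    rw [h3]
    exact ghsum.summable
  have hHsum : HasSum H (risingFactorial (x+1) k' / (c - 1 - k') / D) := by
    have h2 : HasSum H (∑' p, H p) := sumH.hasSum
    have h3 : HasSum gh (∑' p, H p) := h2.prod_fiberwise fiber
    rwa [h3.unique ghsum] at h2
  have hxHsum : HasSum (fun p => x * H p)
      (x * (risingFactorial (x+1) k' / (c - 1 - k') / D)) := hHsum.mul_left x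
  rw [← Equiv.hasSum_iff (Fin.consEquiv fun _ : Fin (k'+1) => ℕ+)]
  have hcomp : ((fun b : Fin (k'+1) → ℕ+ => ∏ i : Fin (k'+1),
      risingFactorial (x + ∑ l ∈ Finset.Iio i, ((b l : ℕ):ℝ)) (b i) /
      risingFactorial (x + a' i + ∑ l ∈ Finset.Iio i, ((b l : ℕ):ℝ)) (b i))
        ∘ (Fin.consEquiv fun _ : Fin (k'+1) => ℕ+)) = fun p => x * H p := by
    funext p
    obtain ⟨n, b'⟩ := p
    have he : (Fin.consEquiv fun _ : Fin (k'+1) => ℕ+) (n, b') = Fin.cons n b' := rfl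
    simp only [Function.comp_apply, he]
    rw [Fin.prod_univ_succ, hH]
    simp only
    rw [← mul_assoc]
    congr 1
    · -- first factor
      have h0 : Finset.Iio (0 : Fin (k'+1)) = ∅ := rfl
      have hA : risingFactorial x (n:ℕ) = x * risingFactorial (x+1) ((n:ℕ) - 1) := by
        conv_lhs => rw [show (n:ℕ) = ((n:ℕ) - 1) + 1 from (Nat.sub_add_cancel (hge n)).symm]
        rw [rf_succ_left]
      simp only [h0, Finset.sum_empty, add_zero, Fin.cons_zero]
      rw [hA, hcdef]
      ring
    · apply Finset.prod_congr rfl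
      intro i _
      have hs : ∑ l ∈ Finset.Iio i.succ, (((Fin.cons (α := fun _ : Fin (k'+1) => ℕ+) n b' l) : ℕ):ℝ)
          = ((n:ℕ):ℝ) + ∑ l ∈ Finset.Iio i, ((b' l : ℕ):ℝ) := by
        rw [sum_Iio_succ (fun l => (((Fin.cons (α := fun _ : Fin (k'+1) => ℕ+) n b' l) : ℕ):ℝ)) i]
        simp [Fin.cons_zero, Fin.cons_succ]
      rw [Fin.cons_succ]
      rw [hs]
      ring_nf
  rw [hcomp]
  have hval : x * (risingFactorial (x+1) k' / (c - 1 - k') / D)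
      = risingFactorial x (k'+1) / ∏ i : Fin (k'+1), (a' i - (((k'+1:ℕ):ℝ) - (i:ℕ))) := by
    have hprod : ∏ i : Fin (k'+1), (a' i - (((k'+1:ℕ):ℝ) - (i:ℕ))) = (c - (k'+1)) * D := by
      rw [Fin.prod_univ_succ]
      congr 1
      · push_cast
        simp [hcdef]
      · rw [hDdef]
        apply Finset.prod_congr rfl
        intro i _
        have hi : ((i.succ : Fin (k'+1)) : ℕ) = (i : ℕ) + 1 := rfl
        rw [hi]
        push_cast
        ring
    rw [hprod, rf_succ_left x k', div_div,
      show c - ((k':ℝ) + 1) = c - 1 - k' from by ring, mul_div_assoc]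
  rw [← hval]
  exact hxHsum
end

section
/- Let d ∈ (0,1), α > −d, k ≥ 1, and let a₁,…,a_k be positive reals with a_i > (k+1−i)·d for each i. Fix 1 ≤ j ≤ k and a nonnegative integer B (playing the role of b̄_{j−1}). Then the iterated sum ∑_{b_j ≥ 1} ⋯ ∑_{b_k ≥ 1} ∏_{i=j}^{k} ( (α/d + B + b_j + ⋯ + b_{i−1})_{(b_i)} / ( (a_i+α)/d + B + b_j + ⋯ + b_{i−1} )_{(b_i)} ) converges and equals (α/d + B)_{(k−j+1)} / ∏_{i=j}^{k} ( a_i/d − (k+1−i) ). -/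
open MeasureTheory Finset

/-!
Write `u = α/d + B`, `w_i = a_i/d`, and induct on the number `m = k - j + 1` of indices, peeling
off the first one. For fixed `b_j`, the sum over the others is, by induction with `u + b_j` in
place of `u`, equal to `(u + b_j)_{(m-1)} / ∏_{i > j} (w_i - (k + 1 - i))`. Since
`(u)_{(b)} (u + b)_{(m-1)} = (u)_{(m-1)} (u + m - 1)_{(b)}`, what is left is the series
`∑_{b ≥ 1} (x)_{(b)} / (v)_{(b)} = x / (v - x - 1)`. It telescopes: `(y)_{(c)} / (v)_{(c+1)}` is
the `c`-th difference of `(y)_{(N)} / (v)_{(N)}` divided by `v - y`, and this ratio tends to `0`.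
The inner terms are nonnegative, so the iterated sums assemble into an unconditional sum over the
product.
-/

open Filter Topology

lemma risingFactorial_zero (x : ℝ) : risingFactorial x 0 = 1 := Finset.prod_range_zero _

lemma risingFactorial_succ (x : ℝ) (n : ℕ) :
    risingFactorial x (n + 1) = risingFactorial x n * (x + n) :=
  Finset.prod_range_succ _ _

lemma risingFactorial_succ' (x : ℝ) (n : ℕ) :
    risingFactorial x (n + 1) = x * risingFactorial (x + 1) n := by
  simp only [risingFactorial, Finset.prod_range_succ', Nat.cast_add, Nat.cast_one, Nat.cast_zero,
    add_zero, add_assoc, add_comm (1 : ℝ), mul_comm x]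

lemma risingFactorial_add (x : ℝ) (m n : ℕ) :
    risingFactorial x (m + n) = risingFactorial x m * risingFactorial (x + m) n := by
  simp only [risingFactorial, Finset.prod_range_add, Nat.cast_add, add_assoc]

lemma risingFactorial_nonneg {x : ℝ} (hx : 0 ≤ x) (n : ℕ) : 0 ≤ risingFactorial x n :=
  Finset.prod_nonneg fun _ _ => by positivity

lemma risingFactorial_pos {x : ℝ} (hx : 0 < x) (n : ℕ) : 0 < risingFactorial x n :=
  Finset.prod_pos fun _ _ => by positivity

/- `(y+l)/(v+l) = 1 - (v-y)/(v+l) ≤ exp (-(v-y)/(v+l))`, and `∑ 1/(v+l)` diverges. -/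
lemma tendsto_risingFactorial_div_risingFactorial {y v : ℝ} (hy : 0 ≤ y) (hyv : y < v) :
    Tendsto (fun N : ℕ => risingFactorial y N / risingFactorial v N) atTop (𝓝 0) := by
  have hv : 0 < v := hy.trans_lt hyv
  have hbound : ∀ N : ℕ, risingFactorial y N / risingFactorial v N ≤
      Real.exp (-((v - y) * ∑ l ∈ Finset.range N, 1 / ((l : ℝ) + v))) := by
    intro N
    rw [risingFactorial, risingFactorial, ← Finset.prod_div_distrib, Finset.mul_sum,
      ← Finset.sum_neg_distrib, Real.exp_sum]
    refine Finset.prod_le_prod (fun l _ => by positivity) fun l _ => ?_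
    calc (y + l) / (v + l) = -((v - y) * (1 / (l + v))) + 1 := by field_simp; ring
      _ ≤ _ := Real.add_one_le_exp _
  have hdiverge :
      Tendsto (fun N : ℕ => ∑ l ∈ Finset.range N, 1 / ((l : ℝ) + v)) atTop atTop := by
    refine (not_summable_iff_tendsto_nat_atTop_of_nonneg fun l => by positivity).mp ?_
    have habs : ∀ l : ℕ, |(l : ℝ) + v| = l + v := fun l => abs_of_pos (by positivity)
    simpa [habs] using mt (Real.summable_one_div_nat_add_rpow v 1).mp (lt_irrefl 1)
  refine squeeze_zero (fun N => div_nonneg (risingFactorial_nonneg hy N)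
    (risingFactorial_nonneg hv.le N)) hbound ?_
  exact Real.tendsto_exp_atBot.comp
    (tendsto_neg_atTop_atBot.comp (hdiverge.const_mul_atTop (sub_pos.2 hyv)))

lemma hasSum_risingFactorial_div_risingFactorial_succ {y v : ℝ} (hy : 0 ≤ y) (hyv : y < v) :
    HasSum (fun c : ℕ => risingFactorial y c / risingFactorial v (c + 1)) (1 / (v - y)) := by
  have hv : 0 < v := hy.trans_lt hyv
  set r : ℕ → ℝ := fun N => risingFactorial y N / risingFactorial v N
  have htelescope : ∀ c : ℕ,
      risingFactorial y c / risingFactorial v (c + 1) = (r c - r (c + 1)) / (v - y) := by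
    intro c
    have := risingFactorial_pos hv c
    have : 0 < v + c := by positivity
    have : v - y ≠ 0 := by linarith
    simp only [r, risingFactorial_succ]
    field_simp
    ring
  rw [hasSum_iff_tendsto_nat_of_nonneg fun c => div_nonneg (risingFactorial_nonneg hy c)
    (risingFactorial_nonneg hv.le _)]
  simp only [htelescope, ← Finset.sum_div, Finset.sum_range_sub']
  simpa [r, risingFactorial_zero] using
    ((tendsto_risingFactorial_div_risingFactorial hy hyv).const_sub (r 0)).div_const (v - y)

lemma hasSum_pnat_risingFactorial_div {x v : ℝ} (hx : -1 < x) (hxv : x + 1 < v) :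
    HasSum (fun b : ℕ+ => risingFactorial x b / risingFactorial v b) (x / (v - x - 1)) := by
  rw [hasSum_pnat_iff_hasSum_succ (f := fun n => risingFactorial x n / risingFactorial v n),
    div_eq_mul_one_div x, sub_sub]
  refine ((hasSum_risingFactorial_div_risingFactorial_succ (by linarith) hxv).mul_left x).congr_fun
    fun c => ?_
  rw [risingFactorial_succ', mul_div_assoc]

lemma hasSum_pnat_risingFactorial_mul_div {x v : ℝ} (m : ℕ) (hx : -1 < x)
    (hxv : x + m + 1 < v) :
    HasSum (fun b : ℕ+ => risingFactorial x b * risingFactorial (x + b) m / risingFactorial v b)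
      (risingFactorial x (m + 1) / (v - x - m - 1)) := by
  have hxm : -1 < x + m := by linarith [(m.cast_nonneg : (0 : ℝ) ≤ m)]
  rw [risingFactorial_succ, mul_div_assoc, sub_sub _ x]
  refine ((hasSum_pnat_risingFactorial_div hxm hxv).mul_left (risingFactorial x m)).congr_fun
    fun b => ?_
  rw [← risingFactorial_add, add_comm, risingFactorial_add, mul_div_assoc]

lemma HasSum.prod_mul_of_nonneg {β γ : Type*} {c g : β → ℝ} {f : β → γ → ℝ} {a : ℝ}
    (hf : ∀ b t, 0 ≤ f b t) (hfg : ∀ b, HasSum (f b) (g b))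
    (hcg : HasSum (fun b => c b * g b) a) :
    HasSum (fun p : β × γ => c p.1 * f p.1 p.2) a := by
  have hcfg : ∀ b, HasSum (fun t => c b * f b t) (c b * g b) := fun b => (hfg b).mul_left (c b)
  have habs : Summable fun p : β × γ => |c p.1 * f p.1 p.2| := by
    refine (summable_prod_of_nonneg fun _ => abs_nonneg _).2
      ⟨fun b => (hcfg b).summable.abs, hcg.summable.abs.congr fun b => ?_⟩
    simp only [abs_mul, abs_of_nonneg (hf _ _)]
    rw [((hfg b).mul_left _).tsum_eq, abs_of_nonneg ((hfg b).nonneg (hf b))]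
  have hsum := habs.of_abs
  rw [← hcg.tsum_eq, ← tsum_congr fun b => (hcfg b).tsum_eq,
    ← hsum.tsum_prod' fun b => (hcfg b).summable]
  exact hsum.hasSum

noncomputable def risingRatioProd {ι : Type*} [Fintype ι] [LinearOrder ι] (u : ℝ)
    (w : ι → ℝ) (b : ι → ℕ+) : ℝ :=
  ∏ i, risingFactorial (u + ∑ l ∈ Finset.univ.filter (· < i), ((b l : ℕ) : ℝ)) (b i) /
    risingFactorial (u + w i + ∑ l ∈ Finset.univ.filter (· < i), ((b l : ℕ) : ℝ)) (b i)

lemma risingRatioProd_nonneg {ι : Type*} [Fintype ι] [LinearOrder ι] {u : ℝ} {w : ι → ℝ}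
    (hu : 0 ≤ u) (hw : ∀ i, 0 ≤ w i) (b : ι → ℕ+) : 0 ≤ risingRatioProd u w b :=
  Finset.prod_nonneg fun i _ =>
    div_nonneg (risingFactorial_nonneg (by positivity) _)
      (risingFactorial_nonneg (add_nonneg (add_nonneg hu (hw i)) (by positivity)) _)

lemma risingRatioProd_comp_orderIso {ι κ : Type*} [Fintype ι] [LinearOrder ι] [Fintype κ]
    [LinearOrder κ] (e : ι ≃o κ) (u : ℝ) (w : κ → ℝ) (b : κ → ℕ+) :
    risingRatioProd u (w ∘ e) (b ∘ e) = risingRatioProd u w b := by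
  unfold risingRatioProd
  refine Fintype.prod_equiv e.toEquiv _ _ fun i => ?_
  have hsum : ∑ l ∈ Finset.univ.filter (· < i), ((b (e l) : ℕ) : ℝ) =
      ∑ l ∈ Finset.univ.filter (· < e i), ((b l : ℕ) : ℝ) := by
    rw [Finset.sum_filter, Finset.sum_filter]
    exact Fintype.sum_equiv e.toEquiv _ _ fun l => by simp
  simp [hsum]

lemma risingRatioProd_cons {m : ℕ} (u : ℝ) (w : Fin (m + 1) → ℝ) (b₀ : ℕ+)
    (t : Fin m → ℕ+) :
    risingRatioProd u w (Fin.cons b₀ t) =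
      risingFactorial u b₀ / risingFactorial (u + w 0) b₀ *
        risingRatioProd (u + (b₀ : ℕ)) (Fin.tail w) t := by
  unfold risingRatioProd
  rw [Fin.prod_univ_succ]
  congr 1
  · simp
  · refine Finset.prod_congr rfl fun i _ => ?_
    have hsum : ∑ l ∈ Finset.univ.filter (· < i.succ),
          (((Fin.cons b₀ t : Fin (m + 1) → ℕ+) l : ℕ) : ℝ) =
        (b₀ : ℕ) + ∑ l ∈ Finset.univ.filter (· < i), ((t l : ℕ) : ℝ) := by
      rw [Finset.sum_filter, Finset.sum_filter, Fin.sum_univ_succ]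
      simp [Fin.succ_pos, Fin.succ_lt_succ_iff]
    rw [hsum]
    simp only [Fin.cons_succ, Fin.tail]
    ring_nf

theorem hasSum_risingRatioProd {m : ℕ} {u : ℝ} (hu : -1 < u) {w : Fin m → ℝ}
    (hw : ∀ i : Fin m, (m : ℝ) - (i : ℕ) < w i) :
    HasSum (risingRatioProd u w)
      (risingFactorial u m / ∏ i, (w i - ((m : ℝ) - (i : ℕ)))) := by
  induction m generalizing u with
  | zero =>
    convert hasSum_unique (risingRatioProd u w)
    simp [risingFactorial_zero, risingRatioProd]
  | succ m ih =>
    have hw₀ : (m : ℝ) + 1 < w 0 := by simpa using hw 0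
    have hw' : ∀ i : Fin m, (m : ℝ) - (i : ℕ) < Fin.tail w i := fun i => by
      simpa [Fin.tail] using hw i.succ
    have hw'_pos : ∀ i : Fin m, 0 < Fin.tail w i := fun i =>
      lt_of_le_of_lt (by simp [i.is_lt.le]) (hw' i)
    have hu_succ : ∀ b₀ : ℕ+, 0 < u + (b₀ : ℕ) := fun b₀ => by
      linarith [(Nat.one_le_cast.2 b₀.pos : (1 : ℝ) ≤ (b₀ : ℕ))]
    set D := ∏ i : Fin m, (Fin.tail w i - ((m : ℝ) - (i : ℕ)))
    have houter :=
      (hasSum_pnat_risingFactorial_mul_div m hu (v := u + w 0) (by linarith)).div_const D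
    have hprod := HasSum.prod_mul_of_nonneg
      (c := fun b₀ : ℕ+ => risingFactorial u b₀ / risingFactorial (u + w 0) b₀)
      (fun b₀ t => risingRatioProd_nonneg (hu_succ b₀).le (fun i => (hw'_pos i).le) t)
      (fun b₀ => ih (by linarith [hu_succ b₀]) hw') (houter.congr_fun fun b₀ => by ring)
    rw [← (Fin.consEquiv fun _ => ℕ+).hasSum_iff]
    convert hprod using 1
    · ext ⟨b₀, t⟩
      exact risingRatioProd_cons u w b₀ t
    · rw [Fin.prod_univ_succ, div_div]
      congr 2
      · push_cast [Fin.val_zero]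
        ring
      · refine Finset.prod_congr rfl fun i _ => ?_
        simp [Fin.tail]

theorem hasSum_risingRatioProd_of_orderIso {ι : Type*} [Fintype ι] [LinearOrder ι] {m : ℕ}
    (e : Fin m ≃o ι) {u : ℝ} (hu : -1 < u) {w : ι → ℝ}
    (hw : ∀ i : Fin m, (m : ℝ) - (i : ℕ) < w (e i)) :
    HasSum (risingRatioProd u w)
      (risingFactorial u m / ∏ i, (w (e i) - ((m : ℝ) - (i : ℕ)))) := by
  rw [← (e.toEquiv.arrowCongr (Equiv.refl ℕ+)).hasSum_iff]
  refine (hasSum_risingRatioProd hu (w := w ∘ e) hw).congr_fun fun b => ?_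
  rw [Function.comp_apply, ← risingRatioProd_comp_orderIso e]
  congr
  ext i
  simp

noncomputable def orderIsoFinIcc {j k : ℕ} (h : j ≤ k) :
    Fin (k - j + 1) ≃o {i : ℕ // i ∈ Finset.Icc j k} :=
  StrictMono.orderIsoOfSurjective (fun p => ⟨j + p, Finset.mem_Icc.2 (by omega)⟩)
    (fun _ _ hlt => by simpa using hlt)
    fun i => ⟨⟨i - j, by have := Finset.mem_Icc.1 i.2; omega⟩, by
      have := Finset.mem_Icc.1 i.2; ext; simp; omega⟩

theorem iterated_sum_risingFactorial_step_general (k : ℕ) (d α : ℝ)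
    (hd : d ∈ Set.Ioo (0 : ℝ) 1) (hα : -d < α)
    (a : ℕ → ℝ)
    (ha : ∀ i ∈ Finset.Icc 1 k, ((k : ℝ) + 1 - (i : ℕ)) * d < a i)
    (j : ℕ) (hj1 : 1 ≤ j) (hjk : j ≤ k) (B : ℕ) :
    HasSum
      (fun b : {i : ℕ // i ∈ Finset.Icc j k} → ℕ+ =>
        ∏ i ∈ (Finset.Icc j k).attach,
          risingFactorial
              (α / d + (B : ℝ) +
                ∑ l ∈ (Finset.Icc j k).attach.filter
                    (fun l : {i : ℕ // i ∈ Finset.Icc j k} => (l : ℕ) < (i : ℕ)),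
                  ((b l : ℕ) : ℝ)) (b i) /
            risingFactorial
              ((a (i : ℕ) + α) / d + (B : ℝ) +
                ∑ l ∈ (Finset.Icc j k).attach.filter
                    (fun l : {i : ℕ // i ∈ Finset.Icc j k} => (l : ℕ) < (i : ℕ)),
                  ((b l : ℕ) : ℝ)) (b i))
      (risingFactorial (α / d + (B : ℝ)) (k - j + 1) /
        ∏ i ∈ Finset.Icc j k, (a i / d - ((k : ℝ) + 1 - (i : ℕ)))) := by
  obtain ⟨hd₀, -⟩ := hd
  set e := orderIsoFinIcc hjk
  have hu : -1 < α / d + B := by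
    have : -1 < α / d := by rwa [lt_div_iff₀ hd₀, neg_one_mul]
    linarith [B.cast_nonneg (α := ℝ)]
  have hw : ∀ p : Fin (k - j + 1), ((k - j + 1 : ℕ) : ℝ) - (p : ℕ) < a (j + p) / d := by
    intro p
    have := ha (j + p) (by simp; omega)
    rw [lt_div_iff₀ hd₀]
    push_cast [Nat.cast_sub hjk] at this ⊢
    linarith
  convert hasSum_risingRatioProd_of_orderIso e hu (w := fun i => a i / d) hw using 1
  · ext b
    simp only [risingRatioProd, Finset.univ_eq_attach, Subtype.coe_lt_coe, add_div]
    ring_nf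
  · congr 1
    rw [← Finset.prod_coe_sort, ← e.toEquiv.prod_comp]
    refine Fintype.prod_congr _ _ fun p => ?_
    show a (j + p) / d - (_ - ((j + p : ℕ) : ℝ)) = a (j + p) / d - _
    push_cast [Nat.cast_sub hjk]
    ring

/-- Backward-induction step: for `1 ≤ j ≤ k` and a nonnegative integer `B`
(playing the role of `b̄_{j-1}`), the iterated sum over `b_j,…,b_k ≥ 1` (equivalently, since
all terms are nonnegative, the sum over the product space indexed by `i ∈ {j,…,k}`) of
`∏_{i=j}^k (α/d + B + b_j + ⋯ + b_{i-1})_{(b_i)} / ((a_i+α)/d + B + b_j + ⋯ + b_{i-1})_{(b_i)}`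
converges and equals `(α/d + B)_{(k-j+1)} / ∏_{i=j}^k (a_i/d - (k+1-i))`. -/
theorem iterated_sum_risingFactorial_step (k : ℕ) (hk : 1 ≤ k) (d α : ℝ)
    (hd : d ∈ Set.Ioo (0 : ℝ) 1) (hα : -d < α)
    (a : ℕ → ℝ) (hapos : ∀ i ∈ Finset.Icc 1 k, 0 < a i)
    (ha : ∀ i ∈ Finset.Icc 1 k, ((k : ℝ) + 1 - (i : ℕ)) * d < a i)
    (j : ℕ) (hj1 : 1 ≤ j) (hjk : j ≤ k) (B : ℕ) :
    HasSum
      (fun b : {i : ℕ // i ∈ Finset.Icc j k} → ℕ+ =>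
        ∏ i ∈ (Finset.Icc j k).attach,
          risingFactorial
              (α / d + (B : ℝ) +
                ∑ l ∈ (Finset.Icc j k).attach.filter
                    (fun l : {i : ℕ // i ∈ Finset.Icc j k} => (l : ℕ) < (i : ℕ)),
                  ((b l : ℕ) : ℝ)) (b i) /
            risingFactorial
              ((a (i : ℕ) + α) / d + (B : ℝ) +
                ∑ l ∈ (Finset.Icc j k).attach.filter
                    (fun l : {i : ℕ // i ∈ Finset.Icc j k} => (l : ℕ) < (i : ℕ)),
                  ((b l : ℕ) : ℝ)) (b i))
      (risingFactorial (α / d + (B : ℝ)) (k - j + 1) /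
        ∏ i ∈ Finset.Icc j k, (a i / d - ((k : ℝ) + 1 - (i : ℕ)))) :=
  iterated_sum_risingFactorial_step_general k d α hd hα a ha j hj1 hjk B
end

section
/- Let d ∈ (0,1), α > −d, n ≥ 1, and let C = {c₁,…,c_k} be a partition of {1,…,n}. Let z ∈ (ℕ₊)ⁿ satisfy C_z = C, let j₁ < ⋯ < j_k be the distinct values taken by z₁,…,z_n, set b_i = j_i − j_{i−1} (with j₀ = 0) and b̄_i = b₁ + ⋯ + b_i, and let σ be the permutation of {1,…,k} such that c_{σ(i)} = {ℓ : z_ℓ = j_i}. With n_i = |c_i| and a_i(σ) = n_{σ(i)} + ⋯ + n_{σ(k)}, one has ∏_{j=1}^{m(z)} ( (α+(j−1)d) / (g_j(z)+α+(j−1)d) ) = ∏_{i=1}^{k} ( (α/d + b̄_{i−1})_{(b_i)} / ( (a_i(σ)+α)/d + b̄_{i−1} )_{(b_i)} ). -/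
open MeasureTheory Finset

/-!
The range `1, …, m(z)` of `j` splits into the consecutive blocks `b̄_{i-1} < j ≤ b̄_i`. On the
`i`-th block the coordinates with `z_ℓ ≥ j` are exactly those in the level sets of
`j_i, …, j_k`, i.e. in `c_{σ(i)}, …, c_{σ(k)}`, so `g_j(z) = a_i(σ)` there; dividing numerator
and denominator of each factor by `d`, the product over the block is the stated ratio of rising
factorials.
-/

theorem prod_range_sum_eq_prod_prod_range {M : Type*} [CommMonoid M] (f : ℕ → M) :
    ∀ {k : ℕ} (b : Fin k → ℕ),
      ∏ j ∈ range (∑ i, b i), f j = ∏ i, ∏ t ∈ range (b i), f (∑ l ∈ Iio i, b l + t)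
  | 0, _ => by simp
  | k + 1, b => by
    rw [Fin.sum_univ_castSucc, prod_range_add, prod_range_sum_eq_prod_prod_range f,
      Fin.prod_univ_castSucc]
    simp [Fin.sum_Iio_castSucc, Fin.Iio_last_eq_map]

theorem prod_Icc_one_sum_eq_prod_prod_range {M : Type*} [CommMonoid M] (f : ℕ → M)
    {k : ℕ} (b : Fin k → ℕ) :
    ∏ j ∈ Icc 1 (∑ i, b i), f j = ∏ i, ∏ t ∈ range (b i), f (∑ l ∈ Iio i, b l + t + 1) := by
  rw [← Ico_add_one_right_eq_Icc, prod_Ico_eq_prod_range, Nat.add_sub_cancel,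
    prod_range_sum_eq_prod_prod_range (fun j => f (1 + j))]
  simp only [add_comm 1]

theorem sup_sum_Iic_eq_sum {k : ℕ} (b : Fin k → ℕ) :
    univ.sup (fun i => ∑ l ∈ Iic i, b l) = ∑ l, b l := by
  cases k with
  | zero => simp
  | succ k =>
    refine le_antisymm (Finset.sup_le fun i _ => sum_le_sum_of_subset (subset_univ _)) ?_
    simpa [← Fin.top_eq_last] using
      le_sup (f := fun i => ∑ l ∈ Iic i, b l) (mem_univ (Fin.last k))

theorem filter_le_sum_Iic_eq_Ici {k : ℕ} (b : Fin k → ℕ) {i : Fin k} {j : ℕ}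
    (hlo : ∑ l ∈ Iio i, b l < j) (hhi : j ≤ ∑ l ∈ Iic i, b l) :
    ({l | j ≤ ∑ m ∈ Iic l, b m} : Finset (Fin k)) = Ici i := by
  ext l
  simp only [mem_filter, mem_univ, true_and, mem_Ici]
  constructor
  · intro hj
    by_contra! hli
    have := sum_le_sum_of_subset (f := b) fun x hx => mem_Iio.mpr ((mem_Iic.mp hx).trans_lt hli)
    omega
  · intro hil
    exact hhi.trans (sum_le_sum_of_subset (Iic_subset_Iic.mpr hil))

theorem card_filter_comp_eq_sum_card_fiber {α β ι : Type*} [Fintype α] [Fintype ι]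
    [DecidableEq α] [DecidableEq β] {z : α → β} {v : ι → β} (hv : Function.Injective v)
    (hz : ∀ a, ∃ l, z a = v l) (p : β → Prop) [DecidablePred p] :
    #{a | p (z a)} = ∑ l with p (v l), #{a | z a = v l} := by
  rw [← card_biUnion]
  · congr 1
    ext a
    obtain ⟨l, hl⟩ := hz a
    simp only [mem_filter, mem_univ, true_and, mem_biUnion]
    exact ⟨fun h => ⟨l, hl ▸ h, hl⟩, fun ⟨l', h, hl'⟩ => hl' ▸ h⟩
  · intro l _ l' _ hll'
    simp only [disjoint_left, mem_filter, mem_univ, true_and]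
    exact fun a h h' => hll' (hv (h.symm.trans h'))

theorem prod_range_div_eq_risingFactorial_div {d : ℝ} (hd : d ≠ 0) (x y s : ℝ) (m : ℕ) :
    ∏ t ∈ range m, (x + (s + t) * d) / (y + (s + t) * d)
      = risingFactorial (x / d + s) m / risingFactorial (y / d + s) m := by
  rw [risingFactorial, risingFactorial, ← prod_div_distrib]
  refine prod_congr rfl fun t _ => ?_
  have scale (w : ℝ) : w / d + s + t = (w + (s + t) * d) / d := by field_simp; ring
  rw [scale, scale, div_div_div_cancel_right₀ hd]

theorem ratios_product_reindex_general {n k : ℕ} (d α : ℝ)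
    (hd : d ∈ Set.Ioo (0 : ℝ) 1)
    (c : Fin k → Finset (Fin n))
    (z : Fin n → ℕ+)
    (jv : Fin k → ℕ+) (hmono : StrictMono fun i => (jv i : ℕ))
    (himg : Finset.image (fun i => (z i : ℕ)) Finset.univ
      = Finset.image (fun i => (jv i : ℕ)) Finset.univ)
    (b : Fin k → ℕ+) (hb : ∀ i, (jv i : ℕ) = ∑ l ∈ Finset.Iic i, ((b l : ℕ)))
    (σ : Equiv.Perm (Fin k))
    (hσ : ∀ i, c (σ i) = Finset.univ.filter fun ℓ => z ℓ = jv i) :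
    (∏ j ∈ Finset.Icc 1 (mz z),
        (α + ((j : ℝ) - 1) * d) / ((gz z j : ℝ) + α + ((j : ℝ) - 1) * d))
      = ∏ i : Fin k,
          risingFactorial (α / d + ∑ l ∈ Finset.Iio i, ((b l : ℕ) : ℝ)) (b i) /
            risingFactorial
              (((∑ l ∈ Finset.Ici i, ((c (σ l)).card : ℝ)) + α) / d +
                ∑ l ∈ Finset.Iio i, ((b l : ℕ) : ℝ)) (b i) := by
  have hval (ℓ : Fin n) : ∃ i, z ℓ = jv i := by
    obtain ⟨i, -, hi⟩ := mem_image.mp (himg ▸ mem_image_of_mem (fun i => (z i : ℕ)) (mem_univ ℓ))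
    exact ⟨i, PNat.coe_injective hi.symm⟩
  have hmz : mz z = ∑ i, (b i : ℕ) := by
    have hsup := congrArg (fun s => s.sup id) himg
    simp only [sup_image, Function.id_comp, hb] at hsup
    rw [mz, hsup, sup_sum_Iic_eq_sum]
  have hgz (i : Fin k) (t : ℕ) (ht : t < b i) :
      gz z (∑ l ∈ Iio i, (b l : ℕ) + t + 1) = ∑ l ∈ Ici i, #(c (σ l)) := by
    rw [gz, card_filter_comp_eq_sum_card_fiber (p := fun x : ℕ+ => _ ≤ (x : ℕ))
      (fun _ _ h => hmono.injective (congrArg PNat.val h)) hval]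
    simp only [hb]
    rw [filter_le_sum_Iic_eq_Ici (i := i) _ (by omega) (by rw [← sum_Iio_add_eq_sum_Iic]; omega)]
    exact sum_congr rfl fun l _ => by rw [hσ]
  rw [hmz, prod_Icc_one_sum_eq_prod_prod_range]
  refine prod_congr rfl fun i _ => ?_
  rw [← prod_range_div_eq_risingFactorial_div hd.1.ne']
  refine prod_congr rfl fun t ht => ?_
  rw [hgz i t (mem_range.mp ht)]
  congr 1 <;> push_cast <;> ring

/-- Let `C = {c₁,…,c_k}` be a partition of `{1,…,n}` and `z` an allocation
vector with `C_z = C`. Let `j₁ < ⋯ < j_k` be the distinct values taken by `z`, with increments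
`b_i` (so `j_i = b₁ + ⋯ + b_i`, i.e. `j_i = b̄_i`), and let `σ` be the permutation with
`c_{σ(i)} = {ℓ : z_ℓ = j_i}`.  With `n_i = |c_i|` and `a_i(σ) = n_{σ(i)} + ⋯ + n_{σ(k)}`,
`∏_{j=1}^{m(z)} (α+(j-1)d)/(g_j(z)+α+(j-1)d)
  = ∏_{i=1}^k (α/d + b̄_{i-1})_{(b_i)} / ((a_i(σ)+α)/d + b̄_{i-1})_{(b_i)}`. -/
theorem ratios_product_reindex {n k : ℕ} (hn : 1 ≤ n) (hk : 1 ≤ k) (d α : ℝ)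
    (hd : d ∈ Set.Ioo (0 : ℝ) 1) (hα : -d < α)
    (c : Fin k → Finset (Fin n))
    (hne : ∀ i, (c i).Nonempty) (hinj : Function.Injective c)
    (hdisj : ∀ i i', i ≠ i' → Disjoint (c i) (c i'))
    (hcover : ∀ ℓ : Fin n, ∃ i, ℓ ∈ c i)
    (z : Fin n → ℕ+) (hz : Cz z = Finset.image c Finset.univ)
    (jv : Fin k → ℕ+) (hmono : StrictMono fun i => (jv i : ℕ))
    (himg : Finset.image (fun i => (z i : ℕ)) Finset.univ
      = Finset.image (fun i => (jv i : ℕ)) Finset.univ)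
    (b : Fin k → ℕ+) (hb : ∀ i, (jv i : ℕ) = ∑ l ∈ Finset.Iic i, ((b l : ℕ)))
    (σ : Equiv.Perm (Fin k))
    (hσ : ∀ i, c (σ i) = Finset.univ.filter fun ℓ => z ℓ = jv i) :
    (∏ j ∈ Finset.Icc 1 (mz z),
        (α + ((j : ℝ) - 1) * d) / ((gz z j : ℝ) + α + ((j : ℝ) - 1) * d))
      = ∏ i : Fin k,
          risingFactorial (α / d + ∑ l ∈ Finset.Iio i, ((b l : ℕ) : ℝ)) (b i) /
            risingFactorial
              (((∑ l ∈ Finset.Ici i, ((c (σ l)).card : ℝ)) + α) / d +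
                ∑ l ∈ Finset.Iio i, ((b l : ℕ) : ℝ)) (b i) :=
  ratios_product_reindex_general d α hd c z jv hmono himg b hb σ hσ
end
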